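/- If H is a minor of a signed graph G (obtained by vertex deletions, edge deletions, and contractions of edges that are positive after an equivalent switching), and edges e₁, e₂ of H are untied in H, then the corresponding edges are untied in G. -/

import Mathlib

/-- A finite loopless signed multigraph. -/
structure SGraph : Type 1 where
  V : Type
  E : Type
  [fintV : Fintype V]
  [decV : DecidableEq V]
  [fintE : Fintype E]
  [decE : DecidableEq E]
  ends : E → Sym2 V
  loopless : ∀ e, ¬ (ends e).IsDiag
  sgn : E → ℤˣ

attribute [instance] SGraph.fintV SGraph.decV SGraph.fintE SGraph.decE

namespace SGraph

variable (G : SGraph)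

/-- Degree of a vertex in an edge set. -/
noncomputable def deg (S : Set G.E) (v : G.V) : ℕ := {e ∈ S | v ∈ G.ends e}.ncard

/-- The sign of an edge set: the product of the signs of its edges. -/
noncomputable def signOf (S : Set G.E) : ℤˣ := ∏ᶠ e ∈ S, G.sgn e

/-- An edge set is connected: any two of its edges are linked by a chain of
edges of the set, consecutive ones sharing a vertex. -/
def conn (S : Set G.E) : Prop :=
  ∀ e ∈ S, ∀ f ∈ S,
    Relation.ReflTransGen (fun a b => a ∈ S ∧ b ∈ S ∧ ∃ v, v ∈ G.ends a ∧ v ∈ G.ends b) e f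

/-- An edge set is (the edge set of) a cycle: nonempty, every vertex has degree 0 or 2,
and it is connected. -/
def IsCycle (S : Set G.E) : Prop :=
  S.Nonempty ∧ (∀ v, G.deg S v = 0 ∨ G.deg S v = 2) ∧ G.conn S

/-- The vertices covered by an edge set. -/
def verts (S : Set G.E) : Set G.V := {v | ∃ e ∈ S, v ∈ G.ends e}

/-- Two edges are untied: there are cycles of both signs through both edges. -/
def Untied (e₁ e₂ : G.E) : Prop :=
  (∃ C, G.IsCycle C ∧ e₁ ∈ C ∧ e₂ ∈ C ∧ G.signOf C = 1) ∧
  (∃ C, G.IsCycle C ∧ e₁ ∈ C ∧ e₂ ∈ C ∧ G.signOf C = -1)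

/-- Two edges are tied: all cycles through both have the same sign. -/
def Tied (e₁ e₂ : G.E) : Prop :=
  ∀ C C', G.IsCycle C → G.IsCycle C' → e₁ ∈ C → e₂ ∈ C → e₁ ∈ C' → e₂ ∈ C' →
    G.signOf C = G.signOf C'

/-- A signed graph is balanced if every cycle is positive. -/
def Balanced : Prop := ∀ C, G.IsCycle C → G.signOf C = 1

/-- Reachability between vertices avoiding a forbidden vertex set `S`. -/
def ReachOutside (S : Set G.V) : G.V → G.V → Prop :=
  Relation.ReflTransGen (fun a b => a ∉ S ∧ b ∉ S ∧ ∃ e, G.ends e = s(a, b))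

/-- The graph minus the vertex set `S` is connected. -/
def ConnOutside (S : Set G.V) : Prop :=
  ∀ u v : G.V, u ∉ S → v ∉ S → G.ReachOutside S u v

/-- `k`-connectivity: more than `k` vertices, and removing fewer than `k` vertices
leaves a connected graph. -/
def KConnected (k : ℕ) : Prop :=
  k + 1 ≤ Fintype.card G.V ∧ ∀ S : Set G.V, S.ncard < k → G.ConnOutside S

/-- `P` is the edge set of a path from `a` to `b` (possibly trivial when `a = b`). -/
def IsPath (P : Set G.E) (a b : G.V) : Prop :=
  (a = b ∧ P = ∅) ∨
  (a ≠ b ∧ P.Nonempty ∧ G.deg P a = 1 ∧ G.deg P b = 1 ∧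
    (∀ v, v ≠ a → v ≠ b → G.deg P v = 0 ∨ G.deg P v = 2) ∧ G.conn P)

/-- The vertices of a path from `a` to `b`, including its ends. -/
def pverts (P : Set G.E) (a b : G.V) : Set G.V := G.verts P ∪ {a, b}

/-- An edge set is an edge-cut `δ(X)`. -/
def EdgeCut (S : Set G.E) : Prop :=
  ∃ X : Set G.V, ∀ e, e ∈ S ↔ ∃ a b, G.ends e = s(a, b) ∧ a ∈ X ∧ b ∉ X

/-- A signed graph is simple if no two distinct edges are parallel. -/
def Simple : Prop := ∀ e f : G.E, G.ends e = G.ends f → e = f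

end SGraph

namespace SGraph

/-- `H` is a minor of `G` with edge correspondence `ψ`: there are disjoint nonempty
branch sets `φ a`, each connected using edges that are positive after the switching
`sw`, and each edge `h` of `H` corresponds to an edge `ψ h` of `G` joining the
appropriate branch sets, with the sign of `h` equal to the switched sign of `ψ h`. -/
def IsSignedMinor (H G : SGraph) (ψ : H.E → G.E) : Prop :=
  Function.Injective ψ ∧
  ∃ (φ : H.V → Set G.V) (sw : G.V → ℤˣ),
    (∀ a, (φ a).Nonempty) ∧
    (∀ a b, a ≠ b → Disjoint (φ a) (φ b)) ∧
    (∀ a, ∀ x ∈ φ a, ∀ y ∈ φ a,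
      Relation.ReflTransGen (fun p q => p ∈ φ a ∧ q ∈ φ a ∧
        ∃ e, G.ends e = s(p, q) ∧ sw p * sw q * G.sgn e = 1) x y) ∧
    (∀ h : H.E, ∀ a b : H.V, H.ends h = s(a, b) →
      ∃ u ∈ φ a, ∃ v ∈ φ b, G.ends (ψ h) = s(u, v) ∧
        H.sgn h = sw u * sw v * G.sgn (ψ h))

end SGraph

/-! Switching at `sw` does not change the sign of a cycle, since every vertex of a cycle has even
degree; after a suitable switching, all contracted edges of the minor are positive and `ψ`
preserves signs. A cycle `C` of `H` then lifts to a cycle of `G`: keep the edges `ψ '' C` and,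
inside the branch set of each vertex of `C`, join the attachment points of its two edges of `C` by
a path of positive edges. The lift contains `ψ e₁` and `ψ e₂` and has the sign of `C`. -/

namespace SGraph

section Basic

variable {G : SGraph}

lemma exists_ends_eq (e : G.E) : ∃ u v, G.ends e = s(u, v) := by
  induction G.ends e using Sym2.ind with
  | h u v => exact ⟨u, v, rfl⟩

lemma deg_empty (v : G.V) : G.deg ∅ v = 0 := by simp [deg]

lemma deg_eq_zero_of_notMem_verts {S : Set G.E} {v : G.V} (h : v ∉ G.verts S) :
    G.deg S v = 0 := by
  rw [deg, Set.ncard_eq_zero (Set.toFinite _), Set.eq_empty_iff_forall_notMem]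
  exact fun e he => h ⟨e, he⟩

lemma exists_mem_of_deg_ne_zero {S : Set G.E} {v : G.V} (h : G.deg S v ≠ 0) :
    ∃ e ∈ S, v ∈ G.ends e := by
  by_contra! h'
  exact h (deg_eq_zero_of_notMem_verts fun ⟨e, he, hve⟩ => h' e he hve)

lemma deg_insert {S : Set G.E} {e : G.E} (he : e ∉ S) (v : G.V) :
    G.deg (insert e S) v = (if v ∈ G.ends e then 1 else 0) + G.deg S v := by
  unfold deg
  split_ifs with hv
  · have : {f ∈ insert e S | v ∈ G.ends f} = insert e {f ∈ S | v ∈ G.ends f} := by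
      ext f; by_cases hf : f = e <;> simp_all
    rw [this, Set.ncard_insert_of_notMem (fun h => he h.1), add_comm]
  · have : {f ∈ insert e S | v ∈ G.ends f} = {f ∈ S | v ∈ G.ends f} := by
      ext f; by_cases hf : f = e <;> simp_all
    rw [this, zero_add]

lemma deg_pair {e f : G.E} (hef : e ≠ f) (v : G.V) :
    G.deg {e, f} v = (if v ∈ G.ends e then 1 else 0) + (if v ∈ G.ends f then 1 else 0) := by
  rw [deg_insert (by simpa using hef), ← insert_empty_eq f, deg_insert (Set.notMem_empty f),
    deg_empty, add_zero]

lemma deg_union {S T : Set G.E} (h : Disjoint S T) (v : G.V) :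
    G.deg (S ∪ T) v = G.deg S v + G.deg T v := by
  unfold deg
  rw [← Set.ncard_union_eq (h.mono (Set.sep_subset _ _) (Set.sep_subset _ _))]
  congr 1
  ext e
  simp only [Set.mem_union, Set.mem_ofPred_eq]
  tauto

lemma deg_iUnion {ι : Type*} {P : ι → Set G.E} {v : G.V} {i : ι}
    (h : ∀ j, ∀ e ∈ P j, v ∈ G.ends e → j = i) :
    G.deg (⋃ j, P j) v = G.deg (P i) v := by
  unfold deg
  congr 1
  ext e
  simp only [Set.mem_ofPred_eq, Set.mem_iUnion]
  exact ⟨fun ⟨⟨j, hj⟩, hv⟩ => ⟨h j e hj hv ▸ hj, hv⟩, fun ⟨hi, hv⟩ => ⟨⟨i, hi⟩, hv⟩⟩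

lemma signOf_union {S T : Set G.E} (h : Disjoint S T) :
    G.signOf (S ∪ T) = G.signOf S * G.signOf T :=
  finprod_mem_union h (Set.toFinite S) (Set.toFinite T)

lemma signOf_eq_one {S : Set G.E} (h : ∀ e ∈ S, G.sgn e = 1) : G.signOf S = 1 :=
  finprod_mem_of_eqOn_one h

end Basic

section Connectivity

variable {G : SGraph}

def AdjIn (S : Set G.E) (e f : G.E) : Prop :=
  e ∈ S ∧ f ∈ S ∧ ∃ v, v ∈ G.ends e ∧ v ∈ G.ends f

instance (S : Set G.E) : Std.Symm (G.AdjIn S) :=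
  ⟨fun _ _ ⟨he, hf, v, hve, hvf⟩ => ⟨hf, he, v, hvf, hve⟩⟩

lemma reflTransGen_adjIn_mono {S T : Set G.E} (hST : S ⊆ T) {e f : G.E}
    (h : Relation.ReflTransGen (G.AdjIn S) e f) : Relation.ReflTransGen (G.AdjIn T) e f :=
  Relation.ReflTransGen.mono (fun _ _ ⟨he, hf, hv⟩ => ⟨hST he, hST hf, hv⟩) _ _ h

lemma reflTransGen_adjIn_symm {S : Set G.E} {e f : G.E}
    (h : Relation.ReflTransGen (G.AdjIn S) e f) : Relation.ReflTransGen (G.AdjIn S) f e :=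
  Std.Symm.symm _ _ h

lemma conn_of_reflTransGen_image {H : SGraph} {C : Set H.E} {S : Set G.E} {ψ : H.E → G.E}
    (hC : H.conn C)
    (hadj : ∀ g g', H.AdjIn C g g' → Relation.ReflTransGen (G.AdjIn S) (ψ g) (ψ g'))
    (hS : ∀ e ∈ S, ∃ g ∈ C, Relation.ReflTransGen (G.AdjIn S) (ψ g) e) : G.conn S := by
  intro e he f hf
  obtain ⟨g, hg, hge⟩ := hS e he
  obtain ⟨g', hg', hgf⟩ := hS f hf
  exact (reflTransGen_adjIn_symm hge).trans
    ((Relation.ReflTransGen.lift' ψ hadj g g' (hC g hg g' hg')).trans hgf)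

end Connectivity

section Paths

variable {G : SGraph}

lemma IsPath.conn {P : Set G.E} {x y : G.V} (hP : G.IsPath P x y) : G.conn P := by
  rcases hP with ⟨-, rfl⟩ | ⟨-, -, -, -, -, hconn⟩
  · intro e he; exact absurd he (Set.notMem_empty e)
  · exact hconn

lemma IsPath.deg_add_ite {P : Set G.E} {x y : G.V} (hP : G.IsPath P x y) (v : G.V) :
    G.deg P v + (if v = x then 1 else 0) + (if v = y then 1 else 0) = 0 ∨
      G.deg P v + (if v = x then 1 else 0) + (if v = y then 1 else 0) = 2 := by
  rcases hP with ⟨rfl, rfl⟩ | ⟨hxy, -, hx, hy, hmid, -⟩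
  · split_ifs <;> simp [deg_empty]
  · by_cases hvx : v = x
    · subst hvx; simp [hx, hxy]
    by_cases hvy : v = y
    · subst hvy; simp [hy, hvx]
    simpa [hvx, hvy] using hmid v hvx hvy

lemma isPath_of_deg_add_ite {P : Set G.E} {x y : G.V} (hxy : x ≠ y) (hne : P.Nonempty)
    (hconn : G.conn P)
    (hdeg : ∀ v, G.deg P v + (if v = x then 1 else 0) + (if v = y then 1 else 0) = 0 ∨
      G.deg P v + (if v = x then 1 else 0) + (if v = y then 1 else 0) = 2) :
    G.IsPath P x y := by
  refine Or.inr ⟨hxy, hne, ?_, ?_, fun v hvx hvy => by simpa [hvx, hvy] using hdeg v, hconn⟩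
  · simpa [hxy] using hdeg x
  · simpa [Ne.symm hxy] using hdeg y

lemma IsPath.reflTransGen_of_mem {P S : Set G.E} {x y : G.V} (hP : G.IsPath P x y)
    (hPS : P ⊆ S) {e p : G.E} (he : e ∈ S) (hxe : x ∈ G.ends e) (hp : p ∈ P) :
    Relation.ReflTransGen (G.AdjIn S) e p := by
  rcases hP with ⟨-, rfl⟩ | ⟨-, -, hx, -, -, hconn⟩
  · exact absurd hp (Set.notMem_empty p)
  obtain ⟨q, hq, hxq⟩ := exists_mem_of_deg_ne_zero (hx ▸ one_ne_zero)
  exact .head ⟨he, hPS hq, x, hxe, hxq⟩ (reflTransGen_adjIn_mono hPS (hconn q hq p hp))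

lemma IsPath.reflTransGen_of_ends {P S : Set G.E} {x y : G.V} (hP : G.IsPath P x y)
    (hPS : P ⊆ S) {e f : G.E} (he : e ∈ S) (hxe : x ∈ G.ends e) (hf : f ∈ S)
    (hyf : y ∈ G.ends f) : Relation.ReflTransGen (G.AdjIn S) e f := by
  by_cases hxy : x = y
  · exact .single ⟨he, hf, x, hxe, hxy ▸ hyf⟩
  obtain ⟨-, -, -, hy, -, -⟩ := hP.resolve_left (fun h => hxy h.1)
  obtain ⟨q, hq, hyq⟩ := exists_mem_of_deg_ne_zero (hy ▸ one_ne_zero)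
  exact .tail (hP.reflTransGen_of_mem hPS he hxe hq) ⟨hPS hq, hf, y, hyq, hyf⟩

lemma IsPath.cons {P : Set G.E} {u v y : G.V} {e : G.E} (hP : G.IsPath P v y)
    (he : G.ends e = s(u, v)) (hu : u ∉ G.pverts P v y) : G.IsPath (insert e P) u y := by
  simp only [pverts, Set.mem_union, Set.mem_insert_iff, Set.mem_singleton_iff, not_or] at hu
  obtain ⟨huP, huv, huy⟩ := hu
  have hve : v ∈ G.ends e := he ▸ Sym2.mem_mk_right u v
  have heP : e ∉ P := fun h => huP ⟨e, h, he ▸ Sym2.mem_mk_left u v⟩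
  refine isPath_of_deg_add_ite huy ⟨e, Set.mem_insert e P⟩ ?_ fun w => ?_
  · have hlink : ∀ p ∈ P, Relation.ReflTransGen (G.AdjIn (insert e P)) e p := fun p hp =>
      hP.reflTransGen_of_mem (Set.subset_insert e P) (Set.mem_insert e P) hve hp
    rintro f (rfl | hf) g (rfl | hg)
    · exact .refl
    · exact hlink g hg
    · exact reflTransGen_adjIn_symm (hlink f hf)
    · exact reflTransGen_adjIn_mono (Set.subset_insert e P) (hP.conn f hf g hg)
  rw [deg_insert heP, he]
  by_cases hwu : w = u
  · subst hwu
    simp [deg_eq_zero_of_notMem_verts huP, huv, huy]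
  · simp only [Sym2.mem_iff, hwu, false_or, if_false, add_zero]
    grind [hP.deg_add_ite w]

lemma exists_isPath_of_walk {F : Set G.E} {x y : G.V}
    (w : (SimpleGraph.fromRel fun p q => ∃ e ∈ F, G.ends e = s(p, q)).Walk x y)
    (hw : w.IsPath) : ∃ P ⊆ F, G.IsPath P x y ∧ G.verts P ⊆ {v | v ∈ w.support} := by
  induction w with
  | nil =>
    exact ⟨∅, Set.empty_subset F, Or.inl ⟨rfl, rfl⟩,
      fun v ⟨e, he, _⟩ => absurd he (Set.notMem_empty e)⟩
  | @cons u v y hadj w ih =>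
    rw [SimpleGraph.Walk.cons_isPath_iff] at hw
    obtain ⟨P, hPF, hP, hPw⟩ := ih hw.1
    obtain ⟨e, heF, he⟩ : ∃ e ∈ F, G.ends e = s(u, v) := by
      obtain ⟨-, ⟨e, heF, he⟩ | ⟨e, heF, he⟩⟩ := (SimpleGraph.fromRel_adj _ _ _).1 hadj
      exacts [⟨e, heF, he⟩, ⟨e, heF, he.trans Sym2.eq_swap⟩]
    have hu : u ∉ G.pverts P v y := by
      simp only [pverts, Set.mem_union, Set.mem_insert_iff, Set.mem_singleton_iff, not_or]
      exact ⟨fun h => hw.2 (hPw h), hadj.ne, fun h => hw.2 (h ▸ w.end_mem_support)⟩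
    refine ⟨insert e P, Set.insert_subset heF hPF, hP.cons he hu, ?_⟩
    rintro z ⟨f, rfl | hf, hzf⟩
    · rw [he, Sym2.mem_iff] at hzf
      rcases hzf with rfl | rfl
      · exact List.mem_cons_self
      · exact List.mem_cons_of_mem _ w.start_mem_support
    · exact List.mem_cons_of_mem _ (hPw ⟨f, hf, hzf⟩)

lemma exists_isPath_of_reflTransGen {F : Set G.E} {x y : G.V}
    (h : Relation.ReflTransGen (fun p q => ∃ e ∈ F, G.ends e = s(p, q)) x y) :
    ∃ P ⊆ F, G.IsPath P x y := by
  have hreach : (SimpleGraph.fromRel fun p q => ∃ e ∈ F, G.ends e = s(p, q)).Reachable x y := by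
    induction h with
    | refl => rfl
    | @tail b c _ hbc ih =>
      by_cases hb : b = c
      · exact hb ▸ ih
      · exact ih.trans ((SimpleGraph.fromRel_adj _ _ _).2 ⟨hb, Or.inl hbc⟩).reachable
  obtain ⟨w, hw⟩ := hreach.exists_isPath
  obtain ⟨P, hPF, hP, -⟩ := exists_isPath_of_walk w hw
  exact ⟨P, hPF, hP⟩

end Paths

section Switching

variable {G : SGraph}

def switchFactor (sw : G.V → ℤˣ) (e : G.E) : ℤˣ :=
  Sym2.lift ⟨fun u v => sw u * sw v, fun _ _ => mul_comm _ _⟩ (G.ends e)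

abbrev switch (G : SGraph) (sw : G.V → ℤˣ) : SGraph :=
  { G with sgn := fun e => G.switchFactor sw e * G.sgn e }

lemma switchFactor_eq {sw : G.V → ℤˣ} {e : G.E} {u v : G.V} (he : G.ends e = s(u, v)) :
    G.switchFactor sw e = sw u * sw v := by
  simp [switchFactor, he]

lemma switchFactor_eq_prod (sw : G.V → ℤˣ) (e : G.E) :
    G.switchFactor sw e = ∏ w, sw w ^ (if w ∈ G.ends e then 1 else 0) := by
  obtain ⟨u, v, he⟩ := exists_ends_eq e
  have huv : u ≠ v := fun h => G.loopless e (by simp [he, h])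
  rw [switchFactor_eq he, Finset.prod_eq_mul u v huv] <;> simp_all

lemma finprod_switchFactor (sw : G.V → ℤˣ) (S : Set G.E) :
    ∏ᶠ e ∈ S, G.switchFactor sw e = ∏ v, sw v ^ G.deg S v := by
  induction S, S.toFinite using Set.Finite.induction_on with
  | empty => simp [deg_empty]
  | @insert e S he _ ih =>
    rw [finprod_mem_insert _ he S.toFinite, ih, switchFactor_eq_prod]
    simp only [deg_insert he, pow_add, Finset.prod_mul_distrib]

lemma IsCycle.signOf_switch {S : Set G.E} (hS : G.IsCycle S) (sw : G.V → ℤˣ) :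
    (G.switch sw).signOf S = G.signOf S := by
  rw [signOf, finprod_mem_mul_distrib S.toFinite, finprod_switchFactor, Finset.prod_eq_one,
    one_mul, signOf]
  intro v _
  rcases hS.2.1 v with h | h <;> simp [h, Int.units_sq]

end Switching

def positiveEdgesIn (G : SGraph) (A : Set G.V) : Set G.E :=
  {e | G.sgn e = 1 ∧ ∀ v ∈ G.ends e, v ∈ A}

structure IsMinorModel (H G : SGraph) (ψ : H.E → G.E) (φ : H.V → Set G.V) : Prop where
  injective : Function.Injective ψ
  disjoint : ∀ a b, a ≠ b → Disjoint (φ a) (φ b)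
  connected : ∀ a, ∀ x ∈ φ a, ∀ y ∈ φ a,
    Relation.ReflTransGen (fun p q => ∃ e ∈ G.positiveEdgesIn (φ a), G.ends e = s(p, q)) x y
  ends_mem : ∀ h a b, H.ends h = s(a, b) → ∃ u ∈ φ a, ∃ v ∈ φ b, G.ends (ψ h) = s(u, v)
  sgn_eq : ∀ h, G.sgn (ψ h) = H.sgn h

theorem IsSignedMinor.exists_isMinorModel {H G : SGraph} {ψ : H.E → G.E}
    (hm : IsSignedMinor H G ψ) :
    ∃ (sw : G.V → ℤˣ) (φ : H.V → Set G.V), IsMinorModel H (G.switch sw) ψ φ := by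
  obtain ⟨hinj, φ, sw, -, hdisj, hconn, hedge⟩ := hm
  refine ⟨sw, φ, hinj, hdisj, fun a x hx y hy => ?_, fun h a b hab => ?_, fun h => ?_⟩
  · refine Relation.ReflTransGen.mono ?_ _ _ (hconn a x hx y hy)
    rintro p q ⟨hp, hq, e, he, hs⟩
    refine ⟨e, ⟨?_, fun v hv => ?_⟩, he⟩
    · simpa [switchFactor_eq he] using hs
    · rw [he, Sym2.mem_iff] at hv
      rcases hv with rfl | rfl <;> assumption
  · obtain ⟨u, hu, v, hv, he, -⟩ := hedge h a b hab
    exact ⟨u, hu, v, hv, he⟩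
  · obtain ⟨a, b, hab⟩ := exists_ends_eq h
    obtain ⟨u, -, v, -, he, hs⟩ := hedge h a b hab
    simp [switchFactor_eq he, hs]

namespace IsMinorModel

variable {H G : SGraph} {ψ : H.E → G.E} {φ : H.V → Set G.V}

lemma branch_eq (M : IsMinorModel H G ψ φ) {a b : H.V} {v : G.V} (hva : v ∈ φ a)
    (hvb : v ∈ φ b) : a = b := by
  by_contra hab
  exact Set.disjoint_left.1 (M.disjoint a b hab) hva hvb

lemma exists_branch_of_mem_ends (M : IsMinorModel H G ψ φ) {h : H.E} {v : G.V}
    (hv : v ∈ G.ends (ψ h)) : ∃ a ∈ H.ends h, v ∈ φ a := by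
  obtain ⟨a, b, hab⟩ := exists_ends_eq h
  obtain ⟨u, hu, w, hw, he⟩ := M.ends_mem h a b hab
  rw [he, Sym2.mem_iff] at hv
  rw [hab]
  rcases hv with rfl | rfl
  exacts [⟨a, Sym2.mem_mk_left a b, hu⟩, ⟨b, Sym2.mem_mk_right a b, hw⟩]

lemma mem_ends_of_mem_ends (M : IsMinorModel H G ψ φ) {a : H.V} {h : H.E} {v : G.V}
    (hva : v ∈ φ a) (hv : v ∈ G.ends (ψ h)) : a ∈ H.ends h := by
  obtain ⟨b, hb, hvb⟩ := M.exists_branch_of_mem_ends hv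
  exact M.branch_eq hvb hva ▸ hb

lemma exists_mem_ends_of_mem_ends (M : IsMinorModel H G ψ φ) {a : H.V} {h : H.E}
    (ha : a ∈ H.ends h) : ∃ u ∈ φ a, u ∈ G.ends (ψ h) := by
  obtain ⟨b, hab⟩ := Sym2.mem_iff_exists.1 ha
  obtain ⟨u, hu, w, -, he⟩ := M.ends_mem h a b hab
  exact ⟨u, hu, he ▸ Sym2.mem_mk_left u w⟩

lemma not_forall_mem_ends (M : IsMinorModel H G ψ φ) (a : H.V) (h : H.E) :
    ¬ ∀ v ∈ G.ends (ψ h), v ∈ φ a := by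
  intro hall
  obtain ⟨b, c, hbc⟩ := exists_ends_eq h
  obtain ⟨u, hu, w, hw, he⟩ := M.ends_mem h b c hbc
  have hb := M.branch_eq hu (hall u (he ▸ Sym2.mem_mk_left u w))
  have hc := M.branch_eq hw (hall w (he ▸ Sym2.mem_mk_right u w))
  exact H.loopless h (by simp [hbc, hb, hc])

lemma eq_of_mem_ends (M : IsMinorModel H G ψ φ) {a : H.V} {h : H.E} {u w : G.V}
    (hu : u ∈ G.ends (ψ h)) (hw : w ∈ G.ends (ψ h)) (hua : u ∈ φ a) (hwa : w ∈ φ a) :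
    u = w := by
  by_contra huw
  apply M.not_forall_mem_ends a h
  rw [(Sym2.mem_and_mem_iff huw).1 ⟨hu, hw⟩]
  intro v hv
  rcases Sym2.mem_iff.1 hv with rfl | rfl <;> assumption

lemma signOf_image (M : IsMinorModel H G ψ φ) (C : Set H.E) :
    G.signOf (ψ '' C) = H.signOf C := by
  rw [signOf, finprod_mem_image M.injective.injOn]
  exact finprod_mem_congr rfl fun h _ => M.sgn_eq h

lemma deg_image_eq (M : IsMinorModel H G ψ φ) {a : H.V} {v : G.V} (hva : v ∈ φ a)
    (C : Set H.E) : G.deg (ψ '' C) v = G.deg (ψ '' {h ∈ C | a ∈ H.ends h}) v := by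
  unfold deg
  congr 1
  ext e
  constructor
  · rintro ⟨⟨h, hh, rfl⟩, hve⟩
    exact ⟨⟨h, ⟨hh, M.mem_ends_of_mem_ends hva hve⟩, rfl⟩, hve⟩
  · rintro ⟨⟨h, hh, rfl⟩, hve⟩
    exact ⟨⟨h, hh.1, rfl⟩, hve⟩

/-- The piece of the lift of `C` inside the branch set of `a`: a path of positive edges joining
the attachment points of the two edges of `C` at `a` (empty if `a` is not on `C`). -/
lemma exists_branchPath (M : IsMinorModel H G ψ φ) {C : Set H.E} {a : H.V}
    (hCa : H.deg C a = 0 ∨ H.deg C a = 2) :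
    ∃ P ⊆ G.positiveEdgesIn (φ a),
      (∀ v ∈ φ a, G.deg (ψ '' C) v + G.deg P v = 0 ∨ G.deg (ψ '' C) v + G.deg P v = 2) ∧
      (∀ g ∈ C, ∀ g' ∈ C, a ∈ H.ends g → a ∈ H.ends g' →
        Relation.ReflTransGen (G.AdjIn (ψ '' C ∪ P)) (ψ g) (ψ g')) ∧
      (∀ p ∈ P, ∃ g ∈ C, Relation.ReflTransGen (G.AdjIn (ψ '' C ∪ P)) (ψ g) p) := by
  rcases hCa with h0 | h2
  · have hstar : {h ∈ C | a ∈ H.ends h} = ∅ := (Set.ncard_eq_zero (Set.toFinite _)).1 h0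
    refine ⟨∅, Set.empty_subset _, fun v hv => Or.inl ?_, fun g hg _ _ hga _ => ?_,
      fun p hp => absurd hp (Set.notMem_empty p)⟩
    · rw [M.deg_image_eq hv, hstar, Set.image_empty, deg_empty]
    · exact absurd (hstar ▸ ⟨hg, hga⟩ : g ∈ (∅ : Set H.E)) (Set.notMem_empty g)
  obtain ⟨f₁, f₂, hf, hstar⟩ := Set.ncard_eq_two.1 h2
  have hmem : ∀ g, g ∈ C ∧ a ∈ H.ends g ↔ g = f₁ ∨ g = f₂ := fun g =>
    (Set.ext_iff.1 hstar g).trans (by simp)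
  obtain ⟨x, hxa, hx⟩ := M.exists_mem_ends_of_mem_ends ((hmem f₁).2 (Or.inl rfl)).2
  obtain ⟨y, hya, hy⟩ := M.exists_mem_ends_of_mem_ends ((hmem f₂).2 (Or.inr rfl)).2
  obtain ⟨P, hPF, hP⟩ := exists_isPath_of_reflTransGen (M.connected a x hxa y hya)
  have hPS : P ⊆ ψ '' C ∪ P := Set.subset_union_right
  have hψS : ∀ g, g = f₁ ∨ g = f₂ → ψ g ∈ ψ '' C ∪ P := fun g hg =>
    Or.inl ⟨g, ((hmem g).2 hg).1, rfl⟩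
  refine ⟨P, hPF, fun v hv => ?_, fun g hg g' hg' hga hga' => ?_, fun p hp =>
    ⟨f₁, ((hmem f₁).2 (Or.inl rfl)).1, hP.reflTransGen_of_mem hPS (hψS f₁ (Or.inl rfl)) hx hp⟩⟩
  · have hx' : v ∈ G.ends (ψ f₁) ↔ v = x := ⟨fun h => M.eq_of_mem_ends h hx hv hxa, (· ▸ hx)⟩
    have hy' : v ∈ G.ends (ψ f₂) ↔ v = y := ⟨fun h => M.eq_of_mem_ends h hy hv hya, (· ▸ hy)⟩
    rw [M.deg_image_eq hv, hstar, Set.image_pair, deg_pair (M.injective.ne hf)]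
    simp only [hx', hy']
    grind [hP.deg_add_ite v]
  · have h₁₂ := hP.reflTransGen_of_ends hPS (hψS f₁ (Or.inl rfl)) hx (hψS f₂ (Or.inr rfl)) hy
    rcases (hmem g).1 ⟨hg, hga⟩ with rfl | rfl <;> rcases (hmem g').1 ⟨hg', hga'⟩ with rfl | rfl
    exacts [.refl, h₁₂, reflTransGen_adjIn_symm h₁₂, .refl]

section Lift

variable {P : H.V → Set G.E}

lemma disjoint_image_iUnion (M : IsMinorModel H G ψ φ) (hP : ∀ a, P a ⊆ G.positiveEdgesIn (φ a))
    (C : Set H.E) : Disjoint (ψ '' C) (⋃ a, P a) := by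
  rw [Set.disjoint_left]
  rintro _ ⟨h, -, rfl⟩ hU
  obtain ⟨a, ha⟩ := Set.mem_iUnion.1 hU
  exact M.not_forall_mem_ends a h (hP a ha).2

lemma deg_image_union_iUnion (M : IsMinorModel H G ψ φ)
    (hP : ∀ a, P a ⊆ G.positiveEdgesIn (φ a)) (C : Set H.E) {a : H.V} {v : G.V}
    (hva : v ∈ φ a) : G.deg (ψ '' C ∪ ⋃ b, P b) v = G.deg (ψ '' C) v + G.deg (P a) v := by
  rw [deg_union (M.disjoint_image_iUnion hP C),
    deg_iUnion fun b e he hve => M.branch_eq ((hP b he).2 v hve) hva]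

lemma deg_image_union_iUnion_eq_zero (M : IsMinorModel H G ψ φ)
    (hP : ∀ a, P a ⊆ G.positiveEdgesIn (φ a)) (C : Set H.E) {v : G.V} (hv : ∀ a, v ∉ φ a) :
    G.deg (ψ '' C ∪ ⋃ b, P b) v = 0 := by
  apply deg_eq_zero_of_notMem_verts
  rintro ⟨e, (⟨h, -, rfl⟩ | he), hve⟩
  · obtain ⟨a, -, hva⟩ := M.exists_branch_of_mem_ends hve
    exact hv a hva
  · obtain ⟨a, ha⟩ := Set.mem_iUnion.1 he
    exact hv a ((hP a ha).2 v hve)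

end Lift

theorem exists_isCycle_lift (M : IsMinorModel H G ψ φ) {C : Set H.E} (hC : H.IsCycle C) :
    ∃ S, G.IsCycle S ∧ ψ '' C ⊆ S ∧ G.signOf S = H.signOf C := by
  obtain ⟨⟨h₀, hh₀⟩, hdeg, hconn⟩ := hC
  choose P hPF hPdeg hPlink hPlink' using fun a => M.exists_branchPath (C := C) (hdeg a)
  have hsub : ∀ a, ψ '' C ∪ P a ⊆ ψ '' C ∪ ⋃ b, P b := fun a =>
    Set.union_subset_union_right _ (Set.subset_iUnion P a)
  refine ⟨ψ '' C ∪ ⋃ a, P a, ⟨⟨ψ h₀, Or.inl ⟨h₀, hh₀, rfl⟩⟩, fun v => ?_, ?_⟩,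
    Set.subset_union_left, ?_⟩
  · by_cases hv : ∃ a, v ∈ φ a
    · obtain ⟨a, hva⟩ := hv
      rw [M.deg_image_union_iUnion hPF C hva]
      exact hPdeg a v hva
    · exact Or.inl (M.deg_image_union_iUnion_eq_zero hPF C (not_exists.1 hv))
  · refine conn_of_reflTransGen_image (ψ := ψ) hconn ?_ ?_
    · rintro g g' ⟨hg, hg', a, hga, hga'⟩
      exact reflTransGen_adjIn_mono (hsub a) (hPlink a g hg g' hg' hga hga')
    · rintro e (⟨g, hg, rfl⟩ | he)
      · exact ⟨g, hg, .refl⟩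
      · obtain ⟨a, ha⟩ := Set.mem_iUnion.1 he
        obtain ⟨g, hg, hge⟩ := hPlink' a e ha
        exact ⟨g, hg, reflTransGen_adjIn_mono (hsub a) hge⟩
  · have hPsign : G.signOf (⋃ a, P a) = 1 := signOf_eq_one fun e he => by
      obtain ⟨a, ha⟩ := Set.mem_iUnion.1 he
      exact (hPF a ha).1
    rw [signOf_union (M.disjoint_image_iUnion hPF C), M.signOf_image, hPsign, mul_one]

end IsMinorModel

theorem IsSignedMinor.exists_isCycle_lift {H G : SGraph} {ψ : H.E → G.E}
    (hm : IsSignedMinor H G ψ) {C : Set H.E} (hC : H.IsCycle C) :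
    ∃ S, G.IsCycle S ∧ ψ '' C ⊆ S ∧ G.signOf S = H.signOf C := by
  obtain ⟨sw, φ, M⟩ := hm.exists_isMinorModel
  obtain ⟨S, hS, hCS, hsign⟩ := M.exists_isCycle_lift hC
  exact ⟨S, hS, hCS, (IsCycle.signOf_switch (G := G) hS sw).symm.trans hsign⟩

end SGraph

/-- If `H` is a minor of the signed graph `G` and `e₁, e₂` are untied in `H`,
then the corresponding edges are untied in `G`. -/
theorem stmt_7 (H G : SGraph) (ψ : H.E → G.E) (hm : SGraph.IsSignedMinor H G ψ)
    (e₁ e₂ : H.E) (h : H.Untied e₁ e₂) :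
    G.Untied (ψ e₁) (ψ e₂) := by
  have lift : ∀ s, (∃ C, H.IsCycle C ∧ e₁ ∈ C ∧ e₂ ∈ C ∧ H.signOf C = s) →
      ∃ S, G.IsCycle S ∧ ψ e₁ ∈ S ∧ ψ e₂ ∈ S ∧ G.signOf S = s := by
    rintro s ⟨C, hC, h₁, h₂, rfl⟩
    obtain ⟨S, hS, hCS, hsign⟩ := hm.exists_isCycle_lift hC
    exact ⟨S, hS, hCS ⟨e₁, h₁, rfl⟩, hCS ⟨e₂, h₂, rfl⟩, hsign⟩
  exact ⟨lift 1 h.1, lift (-1) h.2⟩
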